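/- arXiv:1511.07466 — 2 statements merged into one kernel-verified Lean document; each statement's English description precedes it below -/
import Mathlib

section
/- Let V ⊆ ℂ((1/z)) be a subspace in the big cell of the Sato Grassmannian, i.e. the projection π : ℂ((1/z)) → ℂ[z] (taking the polynomial part) restricts to a ℂ-linear isomorphism V → ℂ[z]. If ∂_z V ⊆ V, then V = ℂ[z]. -/
open scoped BigOperators

noncomputable section

/-- Multiplication by `z^k` on `ℂ((1/z))`, in coefficient form. -/
def shiftOp (k : ℤ) : (ℤ → ℂ) →ₗ[ℂ] (ℤ → ℂ) where
  toFun f := fun n => f (n - k)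
  map_add' _ _ := rfl
  map_smul' _ _ := rfl

/-- Formal differentiation `∂_z` in coefficient form: `(∂_z f)_n = (n+1) f_{n+1}`. -/
def derivOp : (ℤ → ℂ) →ₗ[ℂ] (ℤ → ℂ) where
  toFun f := fun n => ((n + 1 : ℤ) : ℂ) * f (n + 1)
  map_add' f g := by funext n; simp [mul_add]
  map_smul' c f := by funext n; simp; ring

/-- The projection `π : ℂ((1/z)) → ℂ[z]` onto the polynomial part. -/
def polyPart : (ℤ → ℂ) →ₗ[ℂ] (ℤ → ℂ) where
  toFun f := fun n => if 0 ≤ n then f n else 0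
  map_add' f g := by funext n; by_cases h : 0 ≤ n <;> simp [h]
  map_smul' c f := by funext n; by_cases h : 0 ≤ n <;> simp [h]

/-- The ambient space `ℂ((1/z))`: coefficient functions with support bounded above. -/
def laurentAtInf : Submodule ℂ (ℤ → ℂ) where
  carrier := {f | ∃ N : ℤ, ∀ n, N < n → f n = 0}
  zero_mem' := ⟨0, fun _ _ => rfl⟩
  add_mem' := by
    rintro f g ⟨N, hN⟩ ⟨M, hM⟩
    refine ⟨max N M, fun n hn => ?_⟩
    have h1 := hN n (lt_of_le_of_lt (le_max_left _ _) hn)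
    have h2 := hM n (lt_of_le_of_lt (le_max_right _ _) hn)
    simp [Pi.add_apply, h1, h2]
  smul_mem' := by
    rintro c f ⟨N, hN⟩
    exact ⟨N, fun n hn => by simp [Pi.smul_apply, hN n hn]⟩

/-- The subspace `ℂ[z] ⊆ ℂ((1/z))` of polynomials. -/
def polySpace : Submodule ℂ (ℤ → ℂ) where
  carrier := {f | (∀ n < (0 : ℤ), f n = 0) ∧ ∃ N : ℤ, ∀ n, N < n → f n = 0}
  zero_mem' := ⟨fun _ _ => rfl, 0, fun _ _ => rfl⟩
  add_mem' := by
    rintro f g ⟨hf, N, hN⟩ ⟨hg, M, hM⟩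
    refine ⟨fun n hn => by simp [Pi.add_apply, hf n hn, hg n hn], max N M, fun n hn => ?_⟩
    have h1 := hN n (lt_of_le_of_lt (le_max_left _ _) hn)
    have h2 := hM n (lt_of_le_of_lt (le_max_right _ _) hn)
    simp [Pi.add_apply, h1, h2]
  smul_mem' := by
    rintro c f ⟨hf, N, hN⟩
    exact ⟨fun n hn => by simp [Pi.smul_apply, hf n hn],
      N, fun n hn => by simp [Pi.smul_apply, hN n hn]⟩

/-- `V` lies in the big cell of the Sato Grassmannian: `V ⊆ ℂ((1/z))` and the
polynomial-part projection restricts to a bijection `V → ℂ[z]`. -/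
def BigCell (V : Submodule ℂ (ℤ → ℂ)) : Prop :=
  V ≤ laurentAtInf ∧ (∀ v ∈ V, polyPart v = 0 → v = 0) ∧
    ∀ p ∈ polySpace, ∃ v ∈ V, polyPart v = p

/-- The constant Laurent series `1`. -/
def oneSeries : ℤ → ℂ := fun n => if n = 0 then 1 else 0

/-!
If some `v ∈ V` had a nonzero coefficient `v_m` with `m < 0`, choose `k` beyond the top degree
of `v`. Then `∂_z^k v ∈ V` has zero polynomial part, so `∂_z^k v = 0` by injectivity of `π` on
`V`; but its coefficient at `m - k` is `v_m` times the nonzero integers `m - k + 1, …, m`.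
Hence `V ⊆ ℂ[z]`, where `π` is the identity, and surjectivity of `π|_V` gives `V = ℂ[z]`.
-/

theorem derivOp_iterate_apply (k : ℕ) (f : ℤ → ℂ) (n : ℤ) :
    (derivOp^[k] f) n = (∏ i ∈ Finset.range k, ((n + i + 1 : ℤ) : ℂ)) * f (n + k) := by
  induction k generalizing f n with
  | zero => simp
  | succ k ih =>
    rw [Function.iterate_succ_apply, ih, Finset.prod_range_succ]
    change _ * (((n + k + 1 : ℤ) : ℂ) * f (n + k + 1)) = _
    push_cast
    ring_nf

theorem polyPart_derivOp_iterate_eq_zero {f : ℤ → ℂ} {N : ℤ} (hf : ∀ n, N < n → f n = 0)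
    {k : ℕ} (hk : N < k) : polyPart (derivOp^[k] f) = 0 := by
  funext n
  change (if 0 ≤ n then _ else _) = 0
  split_ifs with hn
  · rw [derivOp_iterate_apply, hf (n + k) (by omega), mul_zero]
  · rfl

theorem derivOp_iterate_apply_sub_ne_zero {f : ℤ → ℂ} {m : ℤ} (hm : m < 0) (hfm : f m ≠ 0)
    (k : ℕ) : (derivOp^[k] f) (m - k) ≠ 0 := by
  rw [derivOp_iterate_apply, sub_add_cancel]
  refine mul_ne_zero (Finset.prod_ne_zero_iff.mpr fun i hi => ?_) hfm
  have hik : (i : ℤ) < k := by exact_mod_cast Finset.mem_range.mp hi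
  exact_mod_cast (by omega : m - k + i + 1 ≠ 0)

theorem le_polySpace_of_derivOp_mapsTo {V : Submodule ℂ (ℤ → ℂ)} (hV : V ≤ laurentAtInf)
    (hπ : ∀ v ∈ V, polyPart v = 0 → v = 0) (hD : Set.MapsTo derivOp V V) :
    V ≤ polySpace := by
  intro v hv
  refine ⟨fun m hm => ?_, hV hv⟩
  by_contra hvm
  obtain ⟨N, hN⟩ := hV hv
  have hk : N < (N.toNat + 1 : ℕ) := by omega
  have hzero := hπ _ (hD.iterate _ hv) (polyPart_derivOp_iterate_eq_zero hN hk)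
  exact derivOp_iterate_apply_sub_ne_zero hm hvm _ (congrFun hzero _)

theorem polyPart_eq_self_of_mem_polySpace {f : ℤ → ℂ} (hf : f ∈ polySpace) :
    polyPart f = f := by
  funext n
  change (if 0 ≤ n then _ else _) = _
  split_ifs with hn
  · rfl
  · exact (hf.1 n (by omega)).symm

/-- if `V` is in the big cell and `∂_z V ⊆ V`, then `V = ℂ[z]`. -/
theorem bigCell_deriv_stable_eq_polySpace (V : Submodule ℂ (ℤ → ℂ))
    (hV : BigCell V) (hD : ∀ v ∈ V, derivOp v ∈ V) : V = polySpace := by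
  obtain ⟨hle, hπ, hsurj⟩ := hV
  have hpoly : V ≤ polySpace := le_polySpace_of_derivOp_mapsTo hle hπ fun v hv => hD v hv
  refine le_antisymm hpoly fun p hp => ?_
  obtain ⟨v, hv, rfl⟩ := hsurj p hp
  rwa [polyPart_eq_self_of_mem_polySpace (hpoly hv)]

end
end

section
/- Let n ≥ 1 and let V₁, …, V_n be ℂ-subspaces of ℂ((1/z)), each in the big cell (the polynomial-part projection π restricts to an isomorphism V_i ≅ ℂ[z]), satisfying z V_i ⊆ V_{i+1} (indices mod n). Let φ_i ∈ V_i be the unique element with π(φ_i) = 1. Then for each i, V_i = span_ℂ{ z^k φ_{i−k mod n} : k ≥ 0 }. -/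
open scoped BigOperators

noncomputable section

/-! Since `π(φ_j) = 1`, the series `z^k φ_j` has leading term `z^k`. An element of `V_i` has
bounded degree, so subtracting suitable multiples of `z^k φ_{i-k}` (which lies in `V_i` by the
cyclicity `z V_j ⊆ V_{j+1}`) lowers its degree until its polynomial part vanishes; then it is
zero because `π` is injective on `V_i`. -/

@[simp]
lemma shiftOp_apply (k : ℤ) (f : ℤ → ℂ) (m : ℤ) : shiftOp k f m = f (m - k) := rfl

lemma shiftOp_shiftOp (a b : ℤ) (f : ℤ → ℂ) : shiftOp a (shiftOp b f) = shiftOp (a + b) f := by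
  funext m
  simp [sub_sub]

lemma shiftOp_natCast_mem {ι : Type*} [AddMonoidWithOne ι] {V : ι → Submodule ℂ (ℤ → ℂ)}
    (hcyc : ∀ i, ∀ v ∈ V i, shiftOp 1 v ∈ V (i + 1)) {j : ι} {w : ℤ → ℂ} (hw : w ∈ V j)
    (k : ℕ) : shiftOp k w ∈ V (j + k) := by
  induction k with
  | zero => simpa [shiftOp] using hw
  | succ k ih =>
    have h := hcyc _ _ ih
    rwa [shiftOp_shiftOp, add_assoc, add_comm (1 : ℤ), ← Nat.cast_succ, ← Nat.cast_succ] at h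

lemma apply_zero_of_polyPart_eq_oneSeries {f : ℤ → ℂ} (h : polyPart f = oneSeries) :
    f 0 = 1 := by
  simpa [polyPart, oneSeries] using congrFun h 0

lemma apply_eq_zero_of_polyPart_eq_oneSeries {f : ℤ → ℂ} (h : polyPart f = oneSeries)
    {t : ℤ} (ht : 0 < t) : f t = 0 := by
  simpa [polyPart, oneSeries, ht.le, ht.ne'] using congrFun h t

section LeadingTerms

variable {V : Submodule ℂ (ℤ → ℂ)} (hinj : ∀ v ∈ V, polyPart v = 0 → v = 0)
  {e : ℕ → ℤ → ℂ} (he : ∀ k, e k ∈ V) (hlead : ∀ k : ℕ, e k k = 1)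
  (hvan : ∀ (k : ℕ) (t : ℤ), k < t → e k t = 0)
include hinj he hlead hvan

lemma mem_span_of_apply_eq_zero_of_le (m : ℕ) {v : ℤ → ℂ} (hv : v ∈ V)
    (hvm : ∀ t : ℤ, m ≤ t → v t = 0) : v ∈ Submodule.span ℂ (Set.range e) := by
  induction m generalizing v with
  | zero =>
    have hpoly : polyPart v = 0 := by
      funext t
      by_cases ht : 0 ≤ t
      · simp [polyPart, ht, hvm t (by exact_mod_cast ht)]
      · simp [polyPart, ht]
    rw [hinj v hv hpoly]
    exact zero_mem _
  | succ m ih =>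
    have hred : v - v m • e m ∈ Submodule.span ℂ (Set.range e) := by
      refine ih (sub_mem hv (Submodule.smul_mem _ _ (he m))) fun t ht => ?_
      rcases ht.eq_or_lt with rfl | ht
      · simp [hlead]
      · simp [hvm t (by omega), hvan m t ht]
    simpa using add_mem hred (Submodule.smul_mem _ (v m) (Submodule.subset_span ⟨m, rfl⟩))

theorem eq_span_of_leading_terms (hV : V ≤ laurentAtInf) :
    V = Submodule.span ℂ (Set.range e) := by
  refine le_antisymm (fun v hv => ?_) (Submodule.span_le.mpr (Set.range_subset_iff.mpr he))
  obtain ⟨N, hN⟩ := hV hv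
  exact mem_span_of_apply_eq_zero_of_le hinj he hlead hvan (N + 1).toNat hv
    fun t ht => hN t (by omega)

end LeadingTerms

/-- for a `z`-cyclic chain `V₁, …, V_n` of big-cell points with
`z V_i ⊆ V_{i+1}` (indices mod `n`) and `φ_i ∈ V_i` the unique elements with polynomial
part `1`, each `V_i` is spanned by `{ z^k φ_{i-k mod n} : k ≥ 0 }`. -/
theorem cyclic_quiver_span (n : ℕ) [NeZero n] (V : Fin n → Submodule ℂ (ℤ → ℂ))
    (hbig : ∀ i, BigCell (V i))
    (hcyc : ∀ i, ∀ v ∈ V i, shiftOp 1 v ∈ V (i + 1))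
    (φ : Fin n → (ℤ → ℂ))
    (hφ : ∀ i, φ i ∈ V i ∧ polyPart (φ i) = oneSeries) :
    ∀ i, V i = Submodule.span ℂ
      {v : ℤ → ℂ | ∃ k : ℕ, v = shiftOp (k : ℤ) (φ (i - Fin.ofNat n k))} := by
  intro i
  have hrange : {v : ℤ → ℂ | ∃ k : ℕ, v = shiftOp (k : ℤ) (φ (i - Fin.ofNat n k))} =
      Set.range fun k : ℕ => shiftOp (k : ℤ) (φ (i - Fin.ofNat n k)) := by
    ext
    simp [eq_comm]
  rw [hrange]
  refine eq_span_of_leading_terms (hbig i).2.1 (fun k => ?_) (fun k => ?_) (fun k t ht => ?_)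
    (hbig i).1
  · open Fin.NatCast in
    simpa [Fin.ofNat_eq_cast] using shiftOp_natCast_mem hcyc (hφ (i - Fin.ofNat n k)).1 k
  · simpa using apply_zero_of_polyPart_eq_oneSeries (hφ _).2
  · exact apply_eq_zero_of_polyPart_eq_oneSeries (hφ _).2 (by omega)

end
end
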